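/- Let n ≥ 3 and let A_k = a₀⁽ᵏ⁾·I + a_k·σ (k = 1,…,n) be qubit observables such that {a₁,a₂,a₃} is linearly independent in ℝ³. Then the infimum over all qubit density matrices ρ of Σ_{k=1}^{n} (Δ_ρA_k)² equals Tr(T_{a₁,…,a_n}) − λ_max(T_{a₁,…,a_n}), and this infimum is attained by some qubit density matrix. -/

import Mathlib

open Matrix MeasureTheory Filter Set
open scoped RealInnerProductSpace Kronecker ComplexOrder

noncomputable section

/-- ℝ³ with the Euclidean norm and inner product. -/
abbrev E3 : Type := EuclideanSpace ℝ (Fin 3)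

/-- The Pauli matrices. -/
def pauli1 : Matrix (Fin 2) (Fin 2) ℂ := !![0, 1; 1, 0]
def pauli2 : Matrix (Fin 2) (Fin 2) ℂ := !![0, -Complex.I; Complex.I, 0]
def pauli3 : Matrix (Fin 2) (Fin 2) ℂ := !![1, 0; 0, -1]

/-- The qubit observable `a₀·I + a·σ`. -/
def qObs (a0 : ℝ) (a : E3) : Matrix (Fin 2) (Fin 2) ℂ :=
  (a0 : ℂ) • (1 : Matrix (Fin 2) (Fin 2) ℂ)
    + (a 0 : ℂ) • pauli1 + (a 1 : ℂ) • pauli2 + (a 2 : ℂ) • pauli3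

/-- A density matrix: positive semidefinite with trace one. -/
def IsDensityMatrix {n : Type*} [Fintype n] (ρ : Matrix n n ℂ) : Prop :=
  ρ.PosSemidef ∧ ρ.trace = 1

/-- Mean value `⟨M⟩_ρ = Tr(Mρ)` of an observable `M` in the state `ρ`. -/
def mean {n : Type*} [Fintype n] (M ρ : Matrix n n ℂ) : ℝ :=
  (Matrix.trace (M * ρ)).re

/-- Variance `(Δ_ρ M)² = Tr(M²ρ) − (Tr(Mρ))²`. -/
def variance {n : Type*} [Fintype n] (M ρ : Matrix n n ℂ) : ℝ :=
  (Matrix.trace (M * M * ρ)).re - (mean M ρ) ^ 2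

/-- Uncertainty `Δ_ρ M` (standard deviation). -/
def uncertainty {n : Type*} [Fintype n] (M ρ : Matrix n n ℂ) : ℝ :=
  Real.sqrt (variance M ρ)

/-- Gram matrix of a tuple of vectors in ℝ³. -/
def gram {m : ℕ} (v : Fin m → E3) : Matrix (Fin m) (Fin m) ℝ :=
  Matrix.of fun i j => (inner ℝ (v i) (v j) : ℝ)

lemma gram_isHermitian {m : ℕ} (v : Fin m → E3) : (gram v).IsHermitian := by
  ext i j
  simp [_root_.gram, Matrix.conjTranspose_apply, mul_comm, real_inner_comm]

/-- Smallest eigenvalue of the Gram matrix. -/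
def lamMin {m : ℕ} (v : Fin m → E3) : ℝ := ⨅ i, (gram_isHermitian v).eigenvalues i

/-- Largest eigenvalue of the Gram matrix. -/
def lamMax {m : ℕ} (v : Fin m → E3) : ℝ := ⨆ i, (gram_isHermitian v).eigenvalues i


/-! A qubit state is `ρ = (I + r·σ)/2` with Bloch vector `‖r‖ ≤ 1`, and by the Pauli
anticommutation relations `a₀I + a·σ` has variance `‖a‖² - ⟪a, r⟫²` in it. So the sum of the
variances is `Tr T - ∑ₖ ⟪aₖ, r⟫²`, and it remains to maximise the quadratic form
`S(r) = ∑ₖ ⟪aₖ, r⟫²` over the unit ball. With `x = ∑ₖ ⟪aₖ, r⟫ aₖ`, Cauchy–Schwarz and the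
Rayleigh bound for `T` give `S² = ⟪x, r⟫² ≤ ‖x‖² ‖r‖² ≤ λ_max S ‖r‖²`, so `S ≤ λ_max ‖r‖²`;
equality holds at `r = x / ‖x‖` for `x = ∑ₖ uₖ aₖ`, where `u` is a unit top eigenvector of `T`. -/

open scoped MatrixOrder

namespace Matrix

lemma IsHermitian.posSemidef_of_trace_nonneg_of_det_nonneg {𝕜 : Type*} [RCLike 𝕜]
    {A : Matrix (Fin 2) (Fin 2) 𝕜} (hA : A.IsHermitian) (htr : 0 ≤ A.trace) (hdet : 0 ≤ A.det) :
    A.PosSemidef := by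
  rw [hA.posSemidef_iff_eigenvalues_nonneg]
  rw [hA.trace_eq_sum_eigenvalues, Fin.sum_univ_two] at htr
  rw [hA.det_eq_prod_eigenvalues, Fin.prod_univ_two] at hdet
  norm_cast at htr hdet
  simp only [Pi.le_def, Pi.zero_apply, Fin.forall_fin_two]
  constructor <;> nlinarith

section Rayleigh

variable {m : Type*} [Fintype m] [DecidableEq m] {S : Matrix m m ℝ}

lemma IsHermitian.dotProduct_mulVec_le_iSup_eigenvalues_mul (hS : S.IsHermitian) (x : m → ℝ) :
    x ⬝ᵥ S *ᵥ x ≤ (⨆ i, hS.eigenvalues i) * (x ⬝ᵥ x) := by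
  have hle : S ≤ algebraMap ℝ (Matrix m m ℝ) (⨆ i, hS.eigenvalues i) := by
    refine le_algebraMap_of_spectrum_le fun r hr => ?_
    obtain ⟨i, rfl⟩ := hS.spectrum_real_eq_range_eigenvalues ▸ hr
    exact le_ciSup (Set.finite_range _).bddAbove i
  have := (Matrix.le_iff.mp hle).dotProduct_mulVec_nonneg x
  simpa only [star_trivial, Algebra.algebraMap_eq_smul_one, sub_mulVec, smul_mulVec, one_mulVec,
    dotProduct_sub, dotProduct_smul, smul_eq_mul, sub_nonneg] using this

lemma IsHermitian.exists_mulVec_eq_iSup_eigenvalues_smul [Nonempty m] (hS : S.IsHermitian) :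
    ∃ u : m → ℝ, u ⬝ᵥ u = 1 ∧ S *ᵥ u = (⨆ i, hS.eigenvalues i) • u := by
  obtain ⟨i, hi⟩ := exists_eq_ciSup_of_finite (f := hS.eigenvalues)
  refine ⟨hS.eigenvectorBasis i, ?_, hi ▸ hS.mulVec_eigenvectorBasis i⟩
  have h := real_inner_self_eq_norm_sq (hS.eigenvectorBasis i)
  rwa [EuclideanSpace.inner_eq_star_dotProduct, star_trivial, hS.eigenvectorBasis.norm_eq_one,
    one_pow] at h

end Rayleigh

section Gram

variable {ι F : Type*} [Fintype ι] [NormedAddCommGroup F] [InnerProductSpace ℝ F] (v : ι → F)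

lemma gram_mulVec_apply (w : ι → ℝ) (j : ι) : (gram ℝ v *ᵥ w) j = ⟪v j, ∑ k, w k • v k⟫ := by
  simp [mulVec, dotProduct, inner_sum, real_inner_smul_right, mul_comm]

lemma dotProduct_gram_mulVec (w : ι → ℝ) : w ⬝ᵥ gram ℝ v *ᵥ w = ‖∑ k, w k • v k‖ ^ 2 := by
  simpa [real_inner_self_eq_norm_sq] using star_dotProduct_gram_mulVec (𝕜 := ℝ) v w w

variable [DecidableEq ι]

lemma iSup_eigenvalues_gram_nonneg : 0 ≤ ⨆ i, (isHermitian_gram ℝ v).eigenvalues i :=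
  Real.iSup_nonneg fun i => (posSemidef_gram ℝ v).eigenvalues_nonneg i

lemma sum_inner_sq_le_iSup_eigenvalues_gram_mul (r : F) :
    ∑ k, ⟪v k, r⟫ ^ 2 ≤ (⨆ i, (isHermitian_gram ℝ v).eigenvalues i) * ‖r‖ ^ 2 := by
  set lam := ⨆ i, (isHermitian_gram ℝ v).eigenvalues i
  set S := ∑ k, ⟪v k, r⟫ ^ 2
  set x := ∑ k, ⟪v k, r⟫ • v k
  have hS : S = ⟪x, r⟫ := by simp [S, x, sum_inner, real_inner_smul_left, sq]
  have hx : ‖x‖ ^ 2 ≤ lam * S := by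
    have := (isHermitian_gram ℝ v).dotProduct_mulVec_le_iSup_eigenvalues_mul fun k => ⟪v k, r⟫
    have hS' : ((fun k => ⟪v k, r⟫) ⬝ᵥ fun k => ⟪v k, r⟫) = S := by simp [S, dotProduct, sq]
    rwa [dotProduct_gram_mulVec, hS'] at this
  have hCS : S ^ 2 ≤ ‖x‖ ^ 2 * ‖r‖ ^ 2 := by
    rw [hS, ← mul_pow]
    exact sq_le_sq' (neg_le_of_abs_le (abs_real_inner_le_norm x r)) (real_inner_le_norm x r)
  have hSS : S * S ≤ S * (lam * ‖r‖ ^ 2) := by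
    nlinarith [mul_le_mul_of_nonneg_right hx (sq_nonneg ‖r‖)]
  rcases (show 0 ≤ S by positivity).eq_or_lt with hS0 | hS0
  · rw [← hS0]
    have := iSup_eigenvalues_gram_nonneg v
    positivity
  · exact le_of_mul_le_mul_left hSS hS0

lemma exists_norm_le_one_sum_inner_sq_eq_iSup_eigenvalues_gram :
    ∃ r : F, ‖r‖ ≤ 1 ∧ ∑ k, ⟪v k, r⟫ ^ 2 = ⨆ i, (isHermitian_gram ℝ v).eigenvalues i := by
  rcases isEmpty_or_nonempty ι with hι | hι
  · exact ⟨0, by simp, by simp⟩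
  set lam := ⨆ i, (isHermitian_gram ℝ v).eigenvalues i
  obtain ⟨u, hu1, hu⟩ := (isHermitian_gram ℝ v).exists_mulVec_eq_iSup_eigenvalues_smul
  set x := ∑ k, u k • v k
  have hinner (j : ι) : ⟪v j, x⟫ = lam * u j := by
    rw [← gram_mulVec_apply, hu]
    rfl
  have hx : ‖x‖ ^ 2 = lam := by
    rw [← dotProduct_gram_mulVec, hu, dotProduct_smul, hu1, smul_eq_mul, mul_one]
  have hu2 : ∑ k, u k ^ 2 = 1 := by simpa [dotProduct, sq] using hu1
  refine ⟨‖x‖⁻¹ • x, mem_closedBall_zero_iff.mp (inv_norm_smul_mem_unitClosedBall x), ?_⟩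
  simp only [real_inner_smul_right, hinner, mul_pow, ← Finset.mul_sum, hu2, inv_pow, hx]
  rcases eq_or_ne lam 0 with h | h
  · simp [h]
  · field_simp

end Gram

end Matrix

lemma lamMax_eq_iSup_eigenvalues_gram {m : ℕ} (v : Fin m → E3) :
    lamMax v = ⨆ i, (isHermitian_gram ℝ v).eigenvalues i :=
  rfl

lemma trace_gram {m : ℕ} (v : Fin m → E3) : (gram v).trace = ∑ k, ‖v k‖ ^ 2 := by
  simp [Matrix.trace, _root_.gram]

lemma qObs_eq (a0 : ℝ) (a : E3) :
    qObs a0 a = !![(a0 + a 2 : ℂ), a 0 - a 1 * Complex.I; a 0 + a 1 * Complex.I, a0 - a 2] := by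
  ext i j
  fin_cases i <;> fin_cases j <;> simp [qObs, pauli1, pauli2, pauli3] <;> rfl

lemma qObs_isHermitian (a0 : ℝ) (a : E3) : (qObs a0 a).IsHermitian := by
  ext i j
  fin_cases i <;> fin_cases j <;> simp [qObs_eq, Complex.ext_iff]

lemma trace_qObs (a0 : ℝ) (a : E3) : (qObs a0 a).trace = 2 * a0 := by
  simp [qObs_eq, Matrix.trace_fin_two]
  ring

lemma det_qObs (a0 : ℝ) (a : E3) : (qObs a0 a).det = (a0 ^ 2 - ‖a‖ ^ 2 : ℝ) := by
  simp [qObs_eq, Matrix.det_fin_two, EuclideanSpace.norm_sq_eq, Fin.sum_univ_three]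
  linear_combination (a 1 : ℂ) ^ 2 * Complex.I_sq

lemma qObs_mul_self (a0 : ℝ) (a : E3) :
    qObs a0 a * qObs a0 a = qObs (a0 ^ 2 + ‖a‖ ^ 2) ((2 * a0) • a) := by
  ext i j
  fin_cases i <;> fin_cases j <;>
    simp [qObs_eq, Matrix.mul_apply, EuclideanSpace.norm_sq_eq, Fin.sum_univ_three] <;>
    ring_nf <;> simp [Complex.I_sq]

def blochVector (ρ : Matrix (Fin 2) (Fin 2) ℂ) : E3 :=
  !₂[mean pauli1 ρ, mean pauli2 ρ, mean pauli3 ρ]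

def blochState (r : E3) : Matrix (Fin 2) (Fin 2) ℂ :=
  qObs 2⁻¹ ((2 : ℝ)⁻¹ • r)

lemma mean_qObs {ρ : Matrix (Fin 2) (Fin 2) ℂ} (hρ : ρ.trace = 1) (a0 : ℝ) (a : E3) :
    mean (qObs a0 a) ρ = a0 + ⟪a, blochVector ρ⟫ := by
  simp [mean, blochVector, qObs, add_mul, Matrix.trace_add, Matrix.trace_smul, hρ,
    PiLp.inner_apply, Fin.sum_univ_three]
  ring

lemma variance_qObs {ρ : Matrix (Fin 2) (Fin 2) ℂ} (hρ : ρ.trace = 1) (a0 : ℝ) (a : E3) :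
    variance (qObs a0 a) ρ = ‖a‖ ^ 2 - ⟪a, blochVector ρ⟫ ^ 2 := by
  change mean (qObs a0 a * qObs a0 a) ρ - mean (qObs a0 a) ρ ^ 2 = _
  rw [qObs_mul_self, mean_qObs hρ, mean_qObs hρ, real_inner_smul_left]
  ring

lemma sum_variance_qObs {n : ℕ} (a0 : Fin n → ℝ) (a : Fin n → E3) {ρ : Matrix (Fin 2) (Fin 2) ℂ}
    (hρ : ρ.trace = 1) :
    ∑ k, variance (qObs (a0 k) (a k)) ρ = (gram a).trace - ∑ k, ⟪a k, blochVector ρ⟫ ^ 2 := by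
  simp [variance_qObs hρ, trace_gram]

lemma blochVector_blochState (r : E3) : blochVector (blochState r) = r := by
  ext i
  fin_cases i <;> simp [blochVector, blochState, mean, qObs_eq, pauli1, pauli2, pauli3,
    Matrix.trace_fin_two] <;> ring

lemma isDensityMatrix_blochState {r : E3} (hr : ‖r‖ ≤ 1) : IsDensityMatrix (blochState r) := by
  have htr : (blochState r).trace = 1 := by norm_num [blochState, trace_qObs]
  refine ⟨(qObs_isHermitian _ _).posSemidef_of_trace_nonneg_of_det_nonneg (htr ▸ zero_le_one) ?_,
    htr⟩
  rw [det_qObs, Complex.zero_le_real, norm_smul]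
  norm_num
  nlinarith [norm_nonneg r]

lemma blochState_blochVector {ρ : Matrix (Fin 2) (Fin 2) ℂ} (hρ : IsDensityMatrix ρ) :
    blochState (blochVector ρ) = ρ := by
  obtain ⟨hpsd, htr⟩ := hρ
  have h00 := Complex.ext_iff.mp (hpsd.isHermitian.apply 0 0)
  have h11 := Complex.ext_iff.mp (hpsd.isHermitian.apply 1 1)
  have h01 := Complex.ext_iff.mp (hpsd.isHermitian.apply 0 1)
  have htr' := Complex.ext_iff.mp htr
  simp only [Complex.star_def, Complex.conj_re, Complex.conj_im] at h00 h11 h01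
  simp only [Matrix.trace_fin_two, Complex.add_re, Complex.one_re] at htr'
  ext i j
  fin_cases i <;> fin_cases j <;> apply Complex.ext <;>
    simp [blochState, blochVector, qObs_eq, mean, pauli1, pauli2, pauli3, Matrix.trace_fin_two,
      Matrix.vecMul, dotProduct] <;> linarith

lemma norm_blochVector_le_one {ρ : Matrix (Fin 2) (Fin 2) ℂ} (hρ : IsDensityMatrix ρ) :
    ‖blochVector ρ‖ ≤ 1 := by
  have hdet := hρ.1.det_nonneg
  rw [← blochState_blochVector hρ, blochState, det_qObs, Complex.zero_le_real, norm_smul] at hdet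
  norm_num at hdet
  exact (sq_le_one_iff₀ (norm_nonneg _)).mp (by nlinarith)

/-- the optimal state-independent lower bound for the sum of the variances of
n ≥ 3 qubit observables whose first three Bloch vectors are linearly independent. -/
theorem sum_variances_n_observables_isLeast
    (n : ℕ) (a0 : Fin n → ℝ) (a : Fin n → E3) :
    IsLeast {v : ℝ | ∃ ρ : Matrix (Fin 2) (Fin 2) ℂ, IsDensityMatrix ρ ∧
        v = ∑ k : Fin n, variance (qObs (a0 k) (a k)) ρ}
      ((gram a).trace - lamMax a) := by
  rw [lamMax_eq_iSup_eigenvalues_gram]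
  constructor
  · obtain ⟨r, hr, hmax⟩ := exists_norm_le_one_sum_inner_sq_eq_iSup_eigenvalues_gram a
    refine ⟨blochState r, isDensityMatrix_blochState hr, ?_⟩
    rw [sum_variance_qObs a0 a (isDensityMatrix_blochState hr).2, blochVector_blochState, hmax]
  · rintro _ ⟨ρ, hρ, rfl⟩
    rw [sum_variance_qObs a0 a hρ.2]
    refine sub_le_sub_left ?_ _
    calc ∑ k, ⟪a k, blochVector ρ⟫ ^ 2
        ≤ (⨆ i, (isHermitian_gram ℝ a).eigenvalues i) * ‖blochVector ρ‖ ^ 2 :=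
          sum_inner_sq_le_iSup_eigenvalues_gram_mul a _
      _ ≤ ⨆ i, (isHermitian_gram ℝ a).eigenvalues i :=
          mul_le_of_le_one_right (iSup_eigenvalues_gram_nonneg a)
            (pow_le_one₀ (norm_nonneg _) (norm_blochVector_le_one hρ))
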